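/- For the deterministic max-plus recursion with constant coefficients α, β, γ, δ (i.e., α_k = α etc. for all k), the limit of max(x(k), y(k))/k as k → ∞ exists and equals max(α, δ, (β+γ)/2). -/

import Mathlib

open Filter

theorem maxplus_constant_growth_rate (α β γ δ : ℝ)
    (x y : ℕ → ℝ) (hx0 : x 0 = 0) (hy0 : y 0 = 0)
    (hx : ∀ k, x (k+1) = max (x k + α) (y k + β))
    (hy : ∀ k, y (k+1) = max (x k + γ) (y k + δ)) :
    Tendsto (fun k : ℕ => max (x k) (y k) / (k : ℝ)) atTop
      (nhds (max (max α δ) ((β + γ) / 2))) := by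
  set ρ := max (max α δ) ((β + γ) / 2) with hρdef
  have hαρ : α ≤ ρ := le_trans (le_max_left _ _) (le_max_left _ _)
  have hδρ : δ ≤ ρ := le_trans (le_max_right _ _) (le_max_left _ _)
  have hβγ : β + γ ≤ 2 * ρ := by
    have h : (β + γ) / 2 ≤ ρ := le_max_right _ _
    linarith
  set Cx := max 0 (β - ρ) with hCxdef
  set Cy := max 0 (γ - ρ) with hCydef
  have hCx0 : (0:ℝ) ≤ Cx := le_max_left _ _
  have hCy0 : (0:ℝ) ≤ Cy := le_max_left _ _
  have hCxβ : β - ρ ≤ Cx := le_max_right _ _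
  have hCyγ : γ - ρ ≤ Cy := le_max_right _ _
  have key1 : Cy + β ≤ ρ + Cx := by
    rcases max_choice 0 (γ - ρ) with h | h <;> rw [hCydef, h] <;> linarith
  have key2 : Cx + γ ≤ ρ + Cy := by
    rcases max_choice 0 (β - ρ) with h | h <;> rw [hCxdef, h] <;> linarith
  -- upper bound
  have hub : ∀ k : ℕ, x k ≤ k * ρ + Cx ∧ y k ≤ k * ρ + Cy := by
    intro k
    induction k with
    | zero => simp [hx0, hy0, hCx0, hCy0]
    | succ n ih =>
      obtain ⟨ihx, ihy⟩ := ih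
      have hc : ((n+1 : ℕ) : ℝ) = (n : ℝ) + 1 := by push_cast; ring
      constructor
      · rw [hx n, hc]; apply max_le <;> nlinarith
      · rw [hy n, hc]; apply max_le <;> nlinarith
  set C := max Cx Cy with hCdef
  have hub' : ∀ k : ℕ, max (x k) (y k) ≤ k * ρ + C := by
    intro k
    apply max_le
    · exact (hub k).1.trans (by have := le_max_left Cx Cy; linarith)
    · exact (hub k).2.trans (by have := le_max_right Cx Cy; linarith)
  -- lower bound
  have hlb : ∃ C' : ℝ, ∀ k : ℕ, (k : ℝ) * ρ - C' ≤ max (x k) (y k) := by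
    rcases max_choice (max α δ) ((β + γ) / 2) with h | h
    · rcases max_choice α δ with h2 | h2
      · -- ρ = α
        have hρα : ρ = α := by rw [hρdef, h, h2]
        refine ⟨0, fun k => ?_⟩
        have hxk : ∀ k : ℕ, (k : ℝ) * α ≤ x k := by
          intro k
          induction k with
          | zero => simp [hx0]
          | succ n ih =>
            have hst : x n + α ≤ x (n+1) := by rw [hx n]; exact le_max_left _ _
            push_cast; nlinarith
        have h3 := hxk k
        have h4 := le_max_left (x k) (y k)
        rw [hρα]; linarith
      · -- ρ = δ
        have hρδ : ρ = δ := by rw [hρdef, h, h2]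
        refine ⟨0, fun k => ?_⟩
        have hyk : ∀ k : ℕ, (k : ℝ) * δ ≤ y k := by
          intro k
          induction k with
          | zero => simp [hy0]
          | succ n ih =>
            have hst : y n + δ ≤ y (n+1) := by rw [hy n]; exact le_max_right _ _
            push_cast; nlinarith
        have h3 := hyk k
        have h4 := le_max_right (x k) (y k)
        rw [hρδ]; linarith
    · -- ρ = (β+γ)/2
      have hρbc : 2 * ρ = β + γ := by rw [hρdef, h]; ring
      have hch : ∀ j : ℕ, ((2 * j : ℕ) : ℝ) * ρ ≤ x (2 * j) := by
        intro j
        induction j with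
        | zero => simp [hx0]
        | succ n ih =>
          have h1 : x (2 * n) + γ ≤ y (2 * n + 1) := by
            rw [hy (2*n)]; exact le_max_left _ _
          have h2 : y (2 * n + 1) + β ≤ x (2 * n + 1 + 1) := by
            rw [hx (2*n+1)]; exact le_max_right _ _
          have he : 2 * (n + 1) = 2 * n + 1 + 1 := by ring
          rw [he]
          push_cast
          push_cast at ih
          nlinarith
      refine ⟨max 0 (ρ - α), fun k => ?_⟩
      have hC'1 : ρ - α ≤ max 0 (ρ - α) := le_max_right _ _
      rcases Nat.even_or_odd k with ⟨j, hj⟩ | ⟨j, hj⟩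
      · have hk : k = 2 * j := by omega
        subst hk
        have h3 := hch j
        have h4 := le_max_left (x (2*j)) (y (2*j))
        have h0 : (0:ℝ) ≤ max 0 (ρ - α) := le_max_left _ _
        linarith
      · subst hj
        have h3 := hch j
        have h5 : x (2 * j) + α ≤ x (2 * j + 1) := by
          rw [hx (2*j)]; exact le_max_left _ _
        have h4 := le_max_left (x (2*j+1)) (y (2*j+1))
        push_cast
        push_cast at h3
        nlinarith
  obtain ⟨C', hlb'⟩ := hlb
  -- squeeze
  have hl : Tendsto (fun k : ℕ => ρ - C' / k) atTop (nhds ρ) := by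
    have h0 := tendsto_const_div_atTop_nhds_zero_nat C'
    have := tendsto_const_nhds.sub h0 (α := ℕ) (f := fun _ => ρ)
    simpa using this
  have hr : Tendsto (fun k : ℕ => ρ + C / k) atTop (nhds ρ) := by
    have h0 := tendsto_const_div_atTop_nhds_zero_nat C
    have := tendsto_const_nhds.add h0 (α := ℕ) (f := fun _ => ρ)
    simpa using this
  refine tendsto_of_tendsto_of_tendsto_of_le_of_le' hl hr ?_ ?_
  · filter_upwards [eventually_gt_atTop 0] with k hk
    have hk' : (0:ℝ) < (k:ℝ) := by exact_mod_cast hk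
    have e : ρ - C' / k = ((k:ℝ) * ρ - C') / k := by field_simp
    rw [e]
    exact div_le_div_of_nonneg_right (hlb' k) hk'.le
  · filter_upwards [eventually_gt_atTop 0] with k hk
    have hk' : (0:ℝ) < (k:ℝ) := by exact_mod_cast hk
    have e : ρ + C / k = ((k:ℝ) * ρ + C) / k := by field_simp
    rw [e]
    exact div_le_div_of_nonneg_right (hub' k) hk'.le
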